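/- Let X be a finite set of positive integers, let t ≥ 0 and r ≥ 1 be integers, let Δ ≥ 0 be a real number, and let (X_1, …, X_r) be a weighted r-way (t,Δ)-splitter of X. Then SUMS(X) ∩ [t] ⊆ {y ∈ SUMS(X_1) : y ≤ t/r + Δ} + ⋯ + {y ∈ SUMS(X_r) : y ≤ t/r + Δ} ⊆ SUMS(X). -/
import Mathlib

open Pointwise

/-- `SUM S` is the sum of the elements of the finite set `S`. -/
def SUM (S : Finset ℕ) : ℕ := S.sum id

/-- `SUMS X` is the set of all subset sums of `X`. -/
def SUMS (X : Finset ℕ) : Set ℕ := {y | ∃ S ⊆ X, SUM S = y}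

/-- `Xs` is a weighted `r`-way `(t, Δ)`-splitter of `X`: a partition of `X` into `r` disjoint
parts such that for every `S ⊆ X` with `SUM S ≤ t` there is `Shat ⊆ X` with
`SUM Shat = SUM S` and `SUM (Shat ∩ Xs j) ≤ (SUM Shat)/r + Δ` for every `j`. -/
def IsWeightedSplitter (X : Finset ℕ) (r : ℕ) (Xs : Fin r → Finset ℕ) (t Δ : ℝ) : Prop :=
  Finset.univ.biUnion Xs = X ∧ (∀ i j, i ≠ j → Disjoint (Xs i) (Xs j)) ∧
  ∀ S ⊆ X, (SUM S : ℝ) ≤ t →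
    ∃ Shat ⊆ X, SUM Shat = SUM S ∧
      ∀ j, (SUM (Shat ∩ Xs j) : ℝ) ≤ (SUM Shat : ℝ) / (r : ℝ) + Δ

theorem stmt_14 (X : Finset ℕ) (hpos : ∀ x ∈ X, 0 < x) (t r : ℕ) (hr : 1 ≤ r) (Δ : ℝ)
    (hΔ : 0 ≤ Δ) (Xs : Fin r → Finset ℕ)
    (hsplit : IsWeightedSplitter X r Xs (t : ℝ) Δ) :
    SUMS X ∩ Set.Iic t ⊆
      (∑ j : Fin r, {y ∈ SUMS (Xs j) | (y : ℝ) ≤ (t : ℝ) / (r : ℝ) + Δ}) ∧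
    (∑ j : Fin r, {y ∈ SUMS (Xs j) | (y : ℝ) ≤ (t : ℝ) / (r : ℝ) + Δ}) ⊆ SUMS X := by
  obtain ⟨hcover, hdisj, hspl⟩ := hsplit
  have hXsub : ∀ j, Xs j ⊆ X := by
    intro j x hx
    rw [← hcover]
    exact Finset.mem_biUnion.mpr ⟨j, Finset.mem_univ j, hx⟩
  constructor
  · rintro y ⟨⟨S, hS, rfl⟩, hyt⟩
    have hyt' : (SUM S : ℝ) ≤ (t : ℝ) := by exact_mod_cast hyt
    obtain ⟨Shat, hShat, hsum, hbound⟩ := hspl S hS hyt'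
    rw [Set.mem_fintype_sum]
    refine ⟨fun j => SUM (Shat ∩ Xs j), fun j => ⟨⟨Shat ∩ Xs j, Finset.inter_subset_right, rfl⟩, ?_⟩, ?_⟩
    · have hrpos : (0 : ℝ) < r := by exact_mod_cast Nat.lt_of_lt_of_le Nat.zero_lt_one hr
      have h1 : (SUM Shat : ℝ) ≤ (t : ℝ) := by rw [hsum]; exact hyt'
      calc (SUM (Shat ∩ Xs j) : ℝ) ≤ (SUM Shat : ℝ) / r + Δ := hbound j
        _ ≤ (t : ℝ) / r + Δ := by gcongr
    · have hd : ∀ i ∈ (Finset.univ : Finset (Fin r)), ∀ j ∈ Finset.univ, i ≠ j →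
          Disjoint (Shat ∩ Xs i) (Shat ∩ Xs j) := by
        intro i _ j _ hij
        exact Finset.disjoint_left.mpr fun a ha hb =>
          Finset.disjoint_left.mp (hdisj i j hij) (Finset.mem_inter.mp ha).2
            (Finset.mem_inter.mp hb).2
      have heq : Shat = Finset.univ.biUnion (fun j => Shat ∩ Xs j) := by
        ext x
        simp only [Finset.mem_biUnion, Finset.mem_inter, Finset.mem_univ, true_and]
        constructor
        · intro hx
          have hxX : x ∈ X := hShat hx
          rw [← hcover] at hxX
          obtain ⟨j, _, hj⟩ := Finset.mem_biUnion.mp hxX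
          exact ⟨j, hx, hj⟩
        · rintro ⟨j, hx, _⟩; exact hx
      have hdec : SUM Shat = ∑ j : Fin r, SUM (Shat ∩ Xs j) := by
        calc SUM Shat = SUM (Finset.univ.biUnion fun j => Shat ∩ Xs j) := by rw [← heq]
          _ = ∑ j : Fin r, SUM (Shat ∩ Xs j) := Finset.sum_biUnion hd
      rw [← hsum]; exact hdec.symm
  · intro y hy
    rw [Set.mem_fintype_sum] at hy
    obtain ⟨g, hg, rfl⟩ := hy
    choose Sj hSj hSjsum using fun j => (hg j).1
    refine ⟨Finset.univ.biUnion Sj, ?_, ?_⟩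
    · intro x hx
      obtain ⟨j, _, hj⟩ := Finset.mem_biUnion.mp hx
      exact hXsub j (hSj j hj)
    · rw [SUM, Finset.sum_biUnion]
      · exact Finset.sum_congr rfl fun j _ => hSjsum j
      · intro i _ j _ hij
        exact Finset.disjoint_left.mpr fun a ha hb =>
          Finset.disjoint_left.mp (hdisj i j hij) (hSj i ha) (hSj j hb)
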